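/- Let ξ₁,...,ξₙ be independent centered random variables with ξᵢ ≤ B a.s. and E[|ξᵢ|³] ≤ B·E[ξᵢ²] for some B > 0 and all i. Then for all λ ≥ 0, the tilted variance σ̄²(λ) = ∑ᵢ ( E[ξᵢ²e^{λξᵢ}]/E[e^{λξᵢ}] − (E[ξᵢe^{λξᵢ}]/E[e^{λξᵢ}])² ) satisfies σ̄²(λ) ≥ max(1 − Bλ, 0)·e^{−B²λ²}·σ², where σ² = ∑ᵢ E[ξᵢ²]. -/

import Mathlib

/-!
Write `Z = E e^{λξ}`. By the Lagrange identity, `Z²` times the tilted variance of `ξ` is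
`½ ∬ (x - y)² e^{λ(x+y)}`. Bounding `e^t` from below by its tangent line at `t = -Bλ` and using
`E ξ = 0` and `E ξ³ ≥ -E |ξ|³ ≥ -B E ξ²` gives `Z² σ̄²_ξ(λ) ≥ e^{-Bλ} E ξ²`. On the other hand, for
`u = Bλ ≤ 1`, the bound `ξ ≤ B` and `E ξ² ≤ B²` give `Z ≤ 1 + u²/2 + 2u³/9 ≤ exp (u²/2 + 2u³/9)`,
and `(1 - u) e^{u + 4u³/9} ≤ 1` (as `-log (1 - u) ≥ u + u²/2 + u³/3`) combines the two bounds
into the claim, summand by summand.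
-/

open MeasureTheory ProbabilityTheory Real

theorem exp_le_one_add_add_sq_div_two_of_nonpos {x : ℝ} (hx : x ≤ 0) :
    exp x ≤ 1 + x + x ^ 2 / 2 := by
  have hpos : 0 < 1 - x + x ^ 2 / 2 := by nlinarith
  have hquad := quadratic_le_exp_of_nonneg (neg_nonneg.mpr hx)
  rw [exp_neg] at hquad
  calc exp x ≤ 1 / (1 - x + x ^ 2 / 2) := by
        rw [le_div_iff₀ hpos]
        nlinarith [inv_mul_cancel₀ (exp_pos x).ne', exp_pos x]
    _ ≤ 1 + x + x ^ 2 / 2 := by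
        rw [div_le_iff₀ hpos]
        nlinarith [sq_nonneg (x ^ 2)]

theorem exp_le_cubic_of_le_one {x : ℝ} (hx : x ≤ 1) :
    exp x ≤ 1 + x + x ^ 2 / 2 + 2 / 9 * |x| ^ 3 := by
  rcases le_total x 0 with hneg | hpos
  · linarith [exp_le_one_add_add_sq_div_two_of_nonpos hneg, pow_nonneg (abs_nonneg x) 3]
  · have := Real.exp_bound' hpos hx (n := 3) (by norm_num)
    simp only [Finset.sum_range_succ, Finset.sum_range_zero, Nat.factorial] at this
    rw [abs_of_nonneg hpos]
    norm_num at this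
    linarith

theorem one_sub_mul_exp_add_le_one {u : ℝ} (hu : 0 ≤ u) :
    (1 - u) * exp (u + 4 / 9 * u ^ 3) ≤ 1 := by
  rcases lt_or_ge u 1 with hu1 | hu1
  · have hlog : u + u ^ 2 / 2 + u ^ 3 / 3 ≤ -log (1 - u) := by
      have := sum_le_hasSum (Finset.range 3) (fun i _ => by positivity)
        (hasSum_pow_div_log_of_abs_lt_one (abs_lt.mpr ⟨by linarith, hu1⟩))
      norm_num [Finset.sum_range_succ] at this
      linarith
    calc (1 - u) * exp (u + 4 / 9 * u ^ 3) ≤ (1 - u) * exp (-log (1 - u)) := by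
          gcongr
          nlinarith [mul_nonneg (sq_nonneg u) (sub_nonneg.mpr hu1.le)]
      _ = 1 := by rw [exp_neg, exp_log (by linarith)]; field_simp
  · nlinarith [exp_pos (u + 4 / 9 * u ^ 3)]

section

variable {Ω : Type*} [MeasurableSpace Ω] {μ : Measure Ω}

section Lagrange

variable [SFinite μ] {F G w : Ω → ℝ} (hw : Integrable w μ)
  (hFw : Integrable (fun ω => F ω * w ω) μ) (hGw : Integrable (fun ω => G ω * w ω) μ)
  (hFGw : Integrable (fun ω => F ω * G ω * w ω) μ)
include hw hFw hGw hFGw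

omit [SFinite μ] in
theorem integrable_prod_sub_mul_sub_mul_mul :
    Integrable (fun p : Ω × Ω => (F p.1 - F p.2) * (G p.1 - G p.2) * (w p.1 * w p.2))
      (μ.prod μ) :=
  (((hFGw.mul_prod hw).add (hw.mul_prod hFGw)).sub
    ((hFw.mul_prod hGw).add (hGw.mul_prod hFw))).congr
    (ae_of_all _ fun p => by simp only [Pi.add_apply, Pi.sub_apply]; ring)

theorem integral_prod_sub_mul_sub_mul_mul :
    ∫ p, (F p.1 - F p.2) * (G p.1 - G p.2) * (w p.1 * w p.2) ∂(μ.prod μ) =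
      2 * ((∫ ω, F ω * G ω * w ω ∂μ) * (∫ ω, w ω ∂μ)
        - (∫ ω, F ω * w ω ∂μ) * (∫ ω, G ω * w ω ∂μ)) := by
  have h₁ : Integrable (fun p : Ω × Ω => F p.1 * G p.1 * w p.1 * w p.2) (μ.prod μ) :=
    hFGw.mul_prod hw
  have h₂ : Integrable (fun p : Ω × Ω => w p.1 * (F p.2 * G p.2 * w p.2)) (μ.prod μ) :=
    hw.mul_prod hFGw
  have h₃ : Integrable (fun p : Ω × Ω => F p.1 * w p.1 * (G p.2 * w p.2)) (μ.prod μ) :=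
    hFw.mul_prod hGw
  have h₄ : Integrable (fun p : Ω × Ω => G p.1 * w p.1 * (F p.2 * w p.2)) (μ.prod μ) :=
    hGw.mul_prod hFw
  calc ∫ p, (F p.1 - F p.2) * (G p.1 - G p.2) * (w p.1 * w p.2) ∂(μ.prod μ)
      = ∫ p, (F p.1 * G p.1 * w p.1 * w p.2 + w p.1 * (F p.2 * G p.2 * w p.2))
          - (F p.1 * w p.1 * (G p.2 * w p.2) + G p.1 * w p.1 * (F p.2 * w p.2))
          ∂(μ.prod μ) := by
        congr 1; funext p; ring
    _ = _ := by
        rw [integral_sub, integral_add h₁ h₂, integral_add h₃ h₄,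
          integral_prod_mul (fun ω => F ω * G ω * w ω) w,
          integral_prod_mul w (fun ω => F ω * G ω * w ω),
          integral_prod_mul (fun ω => F ω * w ω) (fun ω => G ω * w ω),
          integral_prod_mul (fun ω => G ω * w ω) (fun ω => F ω * w ω)]
        · ring
        exacts [h₁.add h₂, h₃.add h₄]

end Lagrange

variable [IsProbabilityMeasure μ] {X : Ω → ℝ} {B : ℝ}

theorem integral_sq_le_sq_of_integral_abs_pow_three_le (hB : 0 < B)
    (hX2 : Integrable (fun ω => X ω ^ 2) μ) (hX3 : Integrable (fun ω => |X ω| ^ 3) μ)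
    (hmom3 : ∫ ω, |X ω| ^ 3 ∂μ ≤ B * ∫ ω, X ω ^ 2 ∂μ) :
    ∫ ω, X ω ^ 2 ∂μ ≤ B ^ 2 := by
  -- `2 |x|³ - 3 B x² + B³ = (|x| - B)² (2 |x| + B)`
  have hpt : ∀ ω, 3 * B * X ω ^ 2 ≤ 2 * |X ω| ^ 3 + B ^ 3 := fun ω => by
    rw [← sq_abs (X ω)]
    nlinarith [mul_nonneg (sq_nonneg (|X ω| - B)) (by positivity : 0 ≤ 2 * |X ω| + B)]
  have hint := integral_mono (hX2.const_mul (3 * B))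
    ((hX3.const_mul 2).add (integrable_const (B ^ 3))) hpt
  rw [integral_const_mul, integral_add' (hX3.const_mul 2) (integrable_const _), integral_const_mul,
    integral_const, probReal_univ, one_smul] at hint
  nlinarith

theorem exp_neg_mul_integral_sq_le {l : ℝ} (hl : 0 ≤ l) (hX : Integrable X μ)
    (hmean : ∫ ω, X ω ∂μ = 0) (hX2 : Integrable (fun ω => X ω ^ 2) μ)
    (hX3 : Integrable (fun ω => |X ω| ^ 3) μ)
    (hmom3 : ∫ ω, |X ω| ^ 3 ∂μ ≤ B * ∫ ω, X ω ^ 2 ∂μ)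
    (hE : Integrable (fun ω => exp (l * X ω)) μ)
    (hXE : Integrable (fun ω => X ω * exp (l * X ω)) μ)
    (hX2E : Integrable (fun ω => X ω ^ 2 * exp (l * X ω)) μ) :
    exp (-(B * l)) * ∫ ω, X ω ^ 2 ∂μ ≤
      (∫ ω, X ω ^ 2 * exp (l * X ω) ∂μ) * (∫ ω, exp (l * X ω) ∂μ)
        - (∫ ω, X ω * exp (l * X ω) ∂μ) ^ 2 := by
  set c := 1 + B * l
  set G : Ω → ℝ := fun ω => c * X ω + l * X ω ^ 2
  -- tangent line of `exp` at `-(B * l)`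
  have htangent : ∀ a b : ℝ,
      exp (-(B * l)) * ((a - b) * ((c * a + l * a ^ 2) - (c * b + l * b ^ 2)) * (1 * 1))
        ≤ (a - b) * (a - b) * (exp (l * a) * exp (l * b)) := fun a b => by
    have h := mul_le_mul_of_nonneg_left (add_one_le_exp (l * (a + b) + B * l))
      (mul_nonneg (exp_pos (-(B * l))).le (sq_nonneg (a - b)))
    rw [← exp_add]
    calc _ = exp (-(B * l)) * (a - b) ^ 2 * (l * (a + b) + B * l + 1) := by ring
      _ ≤ _ := h
      _ = _ := by rw [mul_right_comm, ← exp_add]; ring_nf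
  have hX3' : Integrable (fun ω => X ω ^ 3) μ :=
    hX3.mono' (hX.aestronglyMeasurable.pow 3) (ae_of_all _ fun ω => by simp)
  have hthird : -(B * ∫ ω, X ω ^ 2 ∂μ) ≤ ∫ ω, X ω ^ 3 ∂μ := by
    have := integral_mono (f := fun ω => -(|X ω| ^ 3)) hX3.neg hX3' fun ω => by
      have := neg_abs_le (X ω ^ 3)
      rwa [abs_pow] at this
    rw [integral_neg] at this
    linarith
  have hG : Integrable (fun ω => G ω * 1) μ :=
    ((hX.const_mul c).add (hX2.const_mul l)).congr (ae_of_all _ fun ω => by simp [G])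
  have hXG : Integrable (fun ω => X ω * G ω * 1) μ :=
    ((hX2.const_mul c).add (hX3'.const_mul l)).congr
      (ae_of_all _ fun ω => by simp only [Pi.add_apply, G]; ring)
  have hXGint : ∫ ω, X ω * G ω * 1 ∂μ = c * ∫ ω, X ω ^ 2 ∂μ + l * ∫ ω, X ω ^ 3 ∂μ := by
    rw [← integral_const_mul, ← integral_const_mul, ← integral_add (hX2.const_mul c)
      (hX3'.const_mul l)]
    congr 1; funext ω; simp only [G]; ring
  have hX1 : Integrable (fun ω => X ω * 1) μ := by simpa using hX
  have hXXE : Integrable (fun ω => X ω * X ω * exp (l * X ω)) μ := by simpa [sq] using hX2E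
  have hmono := integral_mono
    ((integrable_prod_sub_mul_sub_mul_mul (integrable_const 1) hX1 hG hXG).const_mul _)
    (integrable_prod_sub_mul_sub_mul_mul hE hXE hXE hXXE)
    (fun p => htangent (X p.1) (X p.2))
  rw [integral_const_mul, integral_prod_sub_mul_sub_mul_mul (integrable_const 1) hX1 hG hXG,
    integral_prod_sub_mul_sub_mul_mul hE hXE hXE hXXE, hXGint] at hmono
  simp only [mul_one, hmean, integral_const, probReal_univ, one_smul, zero_mul, sub_zero] at hmono
  simp only [← sq] at hmono
  calc exp (-(B * l)) * ∫ ω, X ω ^ 2 ∂μ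
      ≤ exp (-(B * l)) * (c * ∫ ω, X ω ^ 2 ∂μ + l * ∫ ω, X ω ^ 3 ∂μ) := by
        gcongr
        nlinarith [mul_le_mul_of_nonneg_left hthird hl]
    _ ≤ _ := by linarith

theorem integral_exp_mul_le (hB : 0 < B) {l : ℝ} (hl : 0 ≤ l) (hBl : B * l ≤ 1)
    (hX : Integrable X μ) (hmean : ∫ ω, X ω ∂μ = 0) (hbdd : ∀ᵐ ω ∂μ, X ω ≤ B)
    (hX2 : Integrable (fun ω => X ω ^ 2) μ) (hX3 : Integrable (fun ω => |X ω| ^ 3) μ)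
    (hmom3 : ∫ ω, |X ω| ^ 3 ∂μ ≤ B * ∫ ω, X ω ^ 2 ∂μ)
    (hE : Integrable (fun ω => exp (l * X ω)) μ) :
    ∫ ω, exp (l * X ω) ∂μ ≤ exp ((B * l) ^ 2 / 2 + 2 / 9 * (B * l) ^ 3) := by
  have hpt : ∀ᵐ ω ∂μ, exp (l * X ω)
      ≤ 1 + l * X ω + l ^ 2 / 2 * X ω ^ 2 + 2 / 9 * l ^ 3 * |X ω| ^ 3 := by
    filter_upwards [hbdd] with ω hω
    have := exp_le_cubic_of_le_one (x := l * X ω) (by nlinarith)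
    rw [abs_mul, abs_of_nonneg hl] at this
    linarith
  have hmono := integral_mono_ae hE (by fun_prop) hpt
  rw [integral_add, integral_add, integral_add, integral_const, integral_const_mul,
    integral_const_mul, integral_const_mul, hmean] at hmono
  · have hs := integral_sq_le_sq_of_integral_abs_pow_three_le hB hX2 hX3 hmom3
    have hm3 : ∫ ω, |X ω| ^ 3 ∂μ ≤ B ^ 3 := by
      nlinarith [mul_le_mul_of_nonneg_left hs hB.le]
    simp only [probReal_univ, one_smul, mul_zero, add_zero] at hmono
    calc ∫ ω, exp (l * X ω) ∂μ ≤ (B * l) ^ 2 / 2 + 2 / 9 * (B * l) ^ 3 + 1 := by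
          nlinarith [mul_le_mul_of_nonneg_left hs (sq_nonneg l),
            mul_le_mul_of_nonneg_left hm3 (pow_nonneg hl 3)]
      _ ≤ _ := add_one_le_exp _
  all_goals fun_prop

/-- The variance of `X` under the exponentially tilted measure `μ.tilted (l * X ·)`. -/
noncomputable def tiltedVariance (μ : Measure Ω) (X : Ω → ℝ) (l : ℝ) : ℝ :=
  (∫ ω, X ω ^ 2 * exp (l * X ω) ∂μ) / (∫ ω, exp (l * X ω) ∂μ)
    - ((∫ ω, X ω * exp (l * X ω) ∂μ) / (∫ ω, exp (l * X ω) ∂μ)) ^ 2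

theorem le_tiltedVariance (hB : 0 < B) {l : ℝ} (hl : 0 ≤ l) (hX : Integrable X μ)
    (hmean : ∫ ω, X ω ∂μ = 0) (hbdd : ∀ᵐ ω ∂μ, X ω ≤ B)
    (hX2 : Integrable (fun ω => X ω ^ 2) μ) (hX3 : Integrable (fun ω => |X ω| ^ 3) μ)
    (hmom3 : ∫ ω, |X ω| ^ 3 ∂μ ≤ B * ∫ ω, X ω ^ 2 ∂μ)
    (hE : Integrable (fun ω => exp (l * X ω)) μ)
    (hXE : Integrable (fun ω => X ω * exp (l * X ω)) μ)
    (hX2E : Integrable (fun ω => X ω ^ 2 * exp (l * X ω)) μ) :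
    max (1 - B * l) 0 * exp (-(B ^ 2 * l ^ 2)) * ∫ ω, X ω ^ 2 ∂μ ≤ tiltedVariance μ X l := by
  have hkey := exp_neg_mul_integral_sq_le hl hX hmean hX2 hX3 hmom3 hE hXE hX2E
  rw [tiltedVariance]
  set s := ∫ ω, X ω ^ 2 ∂μ
  set f := ∫ ω, X ω ^ 2 * exp (l * X ω) ∂μ
  set g := ∫ ω, X ω * exp (l * X ω) ∂μ
  set Z := ∫ ω, exp (l * X ω) ∂μ
  have hZ : 0 < Z := mgf_pos hE
  have hs : 0 ≤ s := integral_nonneg fun ω => sq_nonneg _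
  have hvar : f / Z - (g / Z) ^ 2 = (f * Z - g ^ 2) / Z ^ 2 := by
    field_simp
  rw [hvar, le_div_iff₀ (by positivity)]
  refine le_trans ?_ hkey
  set u := B * l
  rcases le_total u 1 with hu | hu
  · have hZ2 : Z ^ 2 ≤ exp (u ^ 2 + 4 / 9 * u ^ 3) := by
      calc Z ^ 2 ≤ exp (u ^ 2 / 2 + 2 / 9 * u ^ 3) ^ 2 := by
            gcongr
            exact integral_exp_mul_le hB hl hu hX hmean hbdd hX2 hX3 hmom3 hE
        _ = _ := by rw [← exp_nat_mul]; ring_nf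
    have hexp : exp (-u ^ 2) * exp (u ^ 2 + 4 / 9 * u ^ 3)
        = exp (u + 4 / 9 * u ^ 3) * exp (-u) := by
      rw [← exp_add, ← exp_add]; ring_nf
    rw [max_eq_left (by linarith), show B ^ 2 * l ^ 2 = u ^ 2 by ring]
    calc (1 - u) * exp (-u ^ 2) * s * Z ^ 2
        ≤ (1 - u) * exp (-u ^ 2) * s * exp (u ^ 2 + 4 / 9 * u ^ 3) := by
          gcongr
      _ = (1 - u) * (exp (-u ^ 2) * exp (u ^ 2 + 4 / 9 * u ^ 3)) * s := by ring
      _ = ((1 - u) * exp (u + 4 / 9 * u ^ 3)) * (exp (-u) * s) := by rw [hexp]; ring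
      _ ≤ exp (-u) * s :=
          mul_le_of_le_one_left (by positivity) (one_sub_mul_exp_add_le_one (by positivity))
  · rw [max_eq_right (by linarith)]
    simp only [zero_mul]
    positivity

end

theorem tilted_variance_lower_bound_general {Ω : Type*} [MeasurableSpace Ω] (μ : Measure Ω)
    [IsProbabilityMeasure μ] (n : ℕ) (ξ : Fin n → Ω → ℝ) (B : ℝ) (hB : 0 < B)
    (hint : ∀ i, Integrable (ξ i) μ) (hmean : ∀ i, ∫ ω, ξ i ω ∂μ = 0)
    (hbdd : ∀ i, ∀ᵐ ω ∂μ, ξ i ω ≤ B)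
    (hint2 : ∀ i, Integrable (fun ω => (ξ i ω) ^ 2) μ)
    (hint3 : ∀ i, Integrable (fun ω => |ξ i ω| ^ 3) μ)
    (hmom3 : ∀ i, ∫ ω, |ξ i ω| ^ 3 ∂μ ≤ B * ∫ ω, (ξ i ω) ^ 2 ∂μ)
    (hinte : ∀ i, ∀ l : ℝ, 0 ≤ l → Integrable (fun ω => Real.exp (l * ξ i ω)) μ)
    (hintxe : ∀ i, ∀ l : ℝ, 0 ≤ l →
      Integrable (fun ω => ξ i ω * Real.exp (l * ξ i ω)) μ)
    (hintx2e : ∀ i, ∀ l : ℝ, 0 ≤ l →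
      Integrable (fun ω => (ξ i ω) ^ 2 * Real.exp (l * ξ i ω)) μ) :
    ∀ l : ℝ, 0 ≤ l →
      max (1 - B * l) 0 * Real.exp (-(B ^ 2 * l ^ 2)) * (∑ i, ∫ ω, (ξ i ω) ^ 2 ∂μ)
        ≤ ∑ i, ((∫ ω, (ξ i ω) ^ 2 * Real.exp (l * ξ i ω) ∂μ) / (∫ ω, Real.exp (l * ξ i ω) ∂μ)
            - ((∫ ω, ξ i ω * Real.exp (l * ξ i ω) ∂μ) / (∫ ω, Real.exp (l * ξ i ω) ∂μ)) ^ 2) := by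
  intro l hl
  rw [Finset.mul_sum]
  exact Finset.sum_le_sum fun i _ => le_tiltedVariance hB hl (hint i) (hmean i) (hbdd i)
    (hint2 i) (hint3 i) (hmom3 i) (hinte i l hl) (hintxe i l hl) (hintx2e i l hl)

/-- Lower bound on the tilted variance under a third-moment condition. -/
theorem tilted_variance_lower_bound {Ω : Type*} [MeasurableSpace Ω] (μ : Measure Ω)
    [IsProbabilityMeasure μ] (n : ℕ) (ξ : Fin n → Ω → ℝ) (B : ℝ) (hB : 0 < B)
    (hmeas : ∀ i, Measurable (ξ i))
    (hindep : iIndepFun ξ μ)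
    (hint : ∀ i, Integrable (ξ i) μ) (hmean : ∀ i, ∫ ω, ξ i ω ∂μ = 0)
    (hbdd : ∀ i, ∀ᵐ ω ∂μ, ξ i ω ≤ B)
    (hint2 : ∀ i, Integrable (fun ω => (ξ i ω) ^ 2) μ)
    (hint3 : ∀ i, Integrable (fun ω => |ξ i ω| ^ 3) μ)
    (hmom3 : ∀ i, ∫ ω, |ξ i ω| ^ 3 ∂μ ≤ B * ∫ ω, (ξ i ω) ^ 2 ∂μ)
    (hinte : ∀ i, ∀ l : ℝ, 0 ≤ l → Integrable (fun ω => Real.exp (l * ξ i ω)) μ)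
    (hintxe : ∀ i, ∀ l : ℝ, 0 ≤ l →
      Integrable (fun ω => ξ i ω * Real.exp (l * ξ i ω)) μ)
    (hintx2e : ∀ i, ∀ l : ℝ, 0 ≤ l →
      Integrable (fun ω => (ξ i ω) ^ 2 * Real.exp (l * ξ i ω)) μ) :
    ∀ l : ℝ, 0 ≤ l →
      max (1 - B * l) 0 * Real.exp (-(B ^ 2 * l ^ 2)) * (∑ i, ∫ ω, (ξ i ω) ^ 2 ∂μ)
        ≤ ∑ i, ((∫ ω, (ξ i ω) ^ 2 * Real.exp (l * ξ i ω) ∂μ) / (∫ ω, Real.exp (l * ξ i ω) ∂μ)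
            - ((∫ ω, ξ i ω * Real.exp (l * ξ i ω) ∂μ) / (∫ ω, Real.exp (l * ξ i ω) ∂μ)) ^ 2) :=
  tilted_variance_lower_bound_general μ n ξ B hB hint hmean hbdd hint2 hint3 hmom3 hinte hintxe
    hintx2e
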